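/- arXiv:math/0205267 — 2 statements merged into one kernel-verified Lean document; each statement's English description precedes it below -/
import Mathlib

section
/- Let k be a finite field with q elements. For d₁, d₂ ≥ 1, the number of pairs (P,Q) of homogeneous polynomials in k[T,U] of degrees d₁ and d₂ respectively with P and Q relatively prime equals (q²-1)(q-1)q^{d₁+d₂-1}. -/
open Polynomial
set_option linter.unusedSectionVars false

noncomputable section RPC

namespace RPC

lemma ncard_biUnion {ι α : Type*} (T : Finset ι) (F : ι → Set α)
    (hfin : ∀ i, (F i).Finite)
    (hdisj : ∀ i ∈ T, ∀ j ∈ T, i ≠ j → Disjoint (F i) (F j)) :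
    (⋃ i ∈ T, F i).ncard = ∑ i ∈ T, (F i).ncard := by
  classical
  have h1 : (⋃ i ∈ T, F i) = ↑(T.biUnion fun i => (hfin i).toFinset) := by
    ext x; simp [Set.Finite.mem_toFinset]
  rw [h1, Set.ncard_coe_finset, Finset.card_biUnion]
  · exact Finset.sum_congr rfl fun i _ => by
      rw [← Set.ncard_coe_finset, Set.Finite.coe_toFinset]
  · intro i hi j hj hij
    rw [Function.onFun, Finset.disjoint_left]
    intro a ha hb
    exact Set.disjoint_left.mp (hdisj i hi j hj hij)
      ((hfin i).mem_toFinset.mp ha) ((hfin j).mem_toFinset.mp hb)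

lemma ncard_prod {α β : Type*} (s : Set α) (t : Set β) :
    (s ×ˢ t).ncard = s.ncard * t.ncard := by
  rw [← Nat.card_coe_set_eq, ← Nat.card_coe_set_eq, ← Nat.card_coe_set_eq,
    Nat.card_congr (Equiv.Set.prod s t), Nat.card_prod]

variable {k : Type} [Field k] [Fintype k]

/-! ### Monic polynomials of given degree -/

def Mon (k : Type) [Field k] (m : ℕ) : Set k[X] := {f | f.Monic ∧ f.natDegree = m}

lemma mon_degree {m : ℕ} {f : k[X]} (hf : f ∈ Mon k m) : f.degree = (m : ℕ∞) := by
  rcases hf with ⟨h1, h2⟩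
  rw [Polynomial.degree_eq_natDegree h1.ne_zero, h2]
  rfl

def monEquiv (m : ℕ) : (Mon k m) ≃ (Polynomial.degreeLT k m) where
  toFun f := ⟨(f : k[X]) - X ^ m, by
    rw [Polynomial.mem_degreeLT]
    have hd : (f : k[X]).degree = (m : ℕ∞) := mon_degree f.2
    calc ((f : k[X]) - X ^ m).degree < (f : k[X]).degree := by
          apply Polynomial.degree_sub_lt
          · rw [Polynomial.degree_X_pow, hd]
            rfl
          · exact f.2.1.ne_zero
          · simp [f.2.1.leadingCoeff]
        _ ≤ (m : WithBot ℕ) := le_of_eq hd⟩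
  invFun g := ⟨X ^ m + (g : k[X]), by
    have hg : (g : k[X]).degree < (m : ℕ∞) := Polynomial.mem_degreeLT.mp g.2
    have hm : (X ^ m + (g : k[X])).Monic := Polynomial.monic_X_pow_add hg
    refine ⟨hm, ?_⟩
    have : (X ^ m + (g : k[X])).degree = (m : ℕ∞) := by
      rw [Polynomial.degree_add_eq_left_of_degree_lt, Polynomial.degree_X_pow]
      rfl
      rw [Polynomial.degree_X_pow]; exact hg
    exact Polynomial.natDegree_eq_of_degree_eq_some this⟩
  left_inv f := by
    apply Subtype.ext
    simp only []
    ring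
  right_inv g := by
    apply Subtype.ext
    simp only []
    ring

lemma mon_finite (m : ℕ) : (Mon k m).Finite := by
  have : Finite (Polynomial.degreeLT k m) := Finite.of_equiv _ (degreeLTEquiv k m).toEquiv.symm
  have : Finite (Mon k m) := Finite.of_equiv _ (monEquiv m).symm
  exact Set.finite_coe_iff.mp this

lemma ncard_mon (m : ℕ) : (Mon k m).ncard = Fintype.card k ^ m := by
  rw [← Nat.card_coe_set_eq, Nat.card_congr (monEquiv m),
    Nat.card_congr (degreeLTEquiv k m).toEquiv, Nat.card_eq_fintype_card]
  simp [Fintype.card_fun]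

def Cop (k : Type) [Field k] (m n : ℕ) : Set (k[X] × k[X]) :=
  {p | p.1 ∈ Mon k m ∧ p.2 ∈ Mon k n ∧ IsCoprime p.1 p.2}

def cc (q m n : ℕ) : ℕ := if m = 0 ∨ n = 0 then q^(m+n) else (q-1)*q^(m+n-1)

lemma cop_finite (m n : ℕ) : (Cop k m n).Finite := by
  apply Set.Finite.subset ((mon_finite (k := k) m).prod (mon_finite n))
  rintro ⟨f, g⟩ ⟨h1, h2, _⟩
  exact ⟨h1, h2⟩

lemma cop_right_zero (m : ℕ) : Cop k m 0 = Mon k m ×ˢ {1} := by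
  ext ⟨f, g⟩
  constructor
  · rintro ⟨h1, ⟨h2, h3⟩, _⟩
    exact ⟨h1, by simpa using h2.natDegree_eq_zero.mp h3⟩
  · rintro ⟨h1, h2⟩
    simp only [Set.mem_singleton_iff] at h2
    subst h2
    exact ⟨h1, ⟨monic_one, natDegree_one⟩, isCoprime_one_right⟩

lemma cop_left_zero (n : ℕ) : Cop k 0 n = {1} ×ˢ Mon k n := by
  ext ⟨f, g⟩
  constructor
  · rintro ⟨⟨h2, h3⟩, h1, _⟩
    exact ⟨by simpa using h2.natDegree_eq_zero.mp h3, h1⟩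
  · rintro ⟨h2, h1⟩
    simp only [Set.mem_singleton_iff] at h2
    subst h2
    exact ⟨⟨monic_one, natDegree_one⟩, h1, isCoprime_one_left⟩

lemma ncard_cop_right_zero (m : ℕ) : (Cop k m 0).ncard = Fintype.card k ^ m := by
  rw [cop_right_zero, ncard_prod, ncard_mon, Set.ncard_singleton, mul_one]

lemma ncard_cop_left_zero (n : ℕ) : (Cop k 0 n).ncard = Fintype.card k ^ n := by
  rw [cop_left_zero, ncard_prod, ncard_mon, Set.ncard_singleton, one_mul]

/-- The key decomposition: every monic pair factors uniquely as gcd times coprime pair. -/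
lemma key_identity (m n : ℕ) :
    (Fintype.card k : ℕ)^(m+n) =
      ∑ e ∈ Finset.range (min m n + 1),
        Fintype.card k ^ e * (Cop k (m-e) (n-e)).ncard := by
  classical
  set q := Fintype.card k
  set MLe : Finset k[X] :=
    (Finset.range (min m n + 1)).biUnion (fun e => (mon_finite (k := k) e).toFinset) with hMLe
  have hmem : ∀ h : k[X], h ∈ MLe ↔ h.Monic ∧ h.natDegree ≤ min m n := by
    intro h
    simp only [hMLe, Finset.mem_biUnion, Finset.mem_range, Set.Finite.mem_toFinset]
    constructor
    · rintro ⟨e, he, h1, h2⟩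
      exact ⟨h1, by omega⟩
    · rintro ⟨h1, h2⟩
      exact ⟨h.natDegree, by omega, h1, rfl⟩
  set F : k[X] → Set (k[X] × k[X]) :=
    fun h => (fun p : k[X] × k[X] => (h * p.1, h * p.2)) ''
      Cop k (m - h.natDegree) (n - h.natDegree) with hF
  -- decomposition of the set of all monic pairs
  have hdecomp : Mon k m ×ˢ Mon k n = ⋃ h ∈ MLe, F h := by
    ext ⟨f, g⟩
    constructor
    · rintro ⟨⟨hf, hfd⟩, hg, hgd⟩
      have hf0 : f ≠ 0 := hf.ne_zero
      have hg0 : g ≠ 0 := hg.ne_zero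
      set d := EuclideanDomain.gcd f g with hd
      have hd0 : d ≠ 0 := fun h0 => hf0 (EuclideanDomain.gcd_eq_zero_iff.mp h0).1
      set c := d.leadingCoeff with hc
      have hc0 : c ≠ 0 := leadingCoeff_ne_zero.mpr hd0
      set h := Polynomial.C c⁻¹ * d with hh
      have hh0 : h ≠ 0 := mul_ne_zero (by simpa using inv_ne_zero hc0) hd0
      have hhc : Polynomial.C c * h = d := by
        rw [hh, ← mul_assoc, ← Polynomial.C_mul, mul_inv_cancel₀ hc0, Polynomial.C_1, one_mul]
      have hmonich : h.Monic := by
        rw [Polynomial.Monic, hh, leadingCoeff_mul, leadingCoeff_C, ← hc,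
          inv_mul_cancel₀ hc0]
      have hdf : h ∣ f := dvd_trans ⟨Polynomial.C c, by rw [mul_comm, hhc]⟩
        (EuclideanDomain.gcd_dvd_left f g)
      have hdg : h ∣ g := dvd_trans ⟨Polynomial.C c, by rw [mul_comm, hhc]⟩
        (EuclideanDomain.gcd_dvd_right f g)
      obtain ⟨f₁, hf₁⟩ := hdf
      obtain ⟨g₁, hg₁⟩ := hdg
      have hf₁0 : f₁ ≠ 0 := by rintro rfl; rw [mul_zero] at hf₁; exact hf0 hf₁
      have hg₁0 : g₁ ≠ 0 := by rintro rfl; rw [mul_zero] at hg₁; exact hg0 hg₁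
      have hmf₁ : f₁.Monic := by
        have := hf.leadingCoeff
        rw [hf₁, leadingCoeff_mul, hmonich.leadingCoeff, one_mul] at this
        exact this
      have hdegf : h.natDegree + f₁.natDegree = m := by
        rw [← hfd, hf₁, natDegree_mul hh0 hf₁0]
      have hdegg : h.natDegree + g₁.natDegree = n := by
        rw [← hgd, hg₁, natDegree_mul hh0 hg₁0]
      have hmg₁ : g₁.Monic := by
        have := hg.leadingCoeff
        rw [hg₁, leadingCoeff_mul, hmonich.leadingCoeff, one_mul] at this
        exact this
      have hhle : h.natDegree ≤ min m n := le_min (by omega) (by omega)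
      have hcop : IsCoprime f₁ g₁ := by
        set A := EuclideanDomain.gcdA f g with hA
        set B := EuclideanDomain.gcdB f g with hB
        have hbez : d = f * A + g * B := EuclideanDomain.gcd_eq_gcd_ab f g
        have key : h * (f₁ * A + g₁ * B) = h * Polynomial.C c := by
          calc h * (f₁ * A + g₁ * B) = (h * f₁) * A + (h * g₁) * B := by ring
            _ = f * A + g * B := by rw [← hf₁, ← hg₁]
            _ = d := hbez.symm
            _ = h * Polynomial.C c := by rw [← hhc]; ring
        have hcc := mul_left_cancel₀ hh0 key
        refine ⟨Polynomial.C c⁻¹ * A, Polynomial.C c⁻¹ * B, ?_⟩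
        have hinv : Polynomial.C c⁻¹ * (Polynomial.C c) = 1 := by
          rw [← Polynomial.C_mul, inv_mul_cancel₀ hc0, Polynomial.C_1]
        calc Polynomial.C c⁻¹ * A * f₁ + Polynomial.C c⁻¹ * B * g₁
            = Polynomial.C c⁻¹ * (f₁ * A + g₁ * B) := by ring
          _ = 1 := by rw [hcc]; exact hinv
      refine Set.mem_biUnion ((hmem h).mpr ⟨hmonich, hhle⟩) ?_
      exact ⟨(f₁, g₁), ⟨⟨hmf₁, show f₁.natDegree = m - h.natDegree by omega⟩,
        ⟨hmg₁, show g₁.natDegree = n - h.natDegree by omega⟩, hcop⟩,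
        by simp [← hf₁, ← hg₁]⟩
    · intro hx
      simp only [Set.mem_iUnion] at hx
      obtain ⟨h, hhm, hx⟩ := hx
      obtain ⟨hmonich, hhle⟩ := (hmem h).mp hhm
      obtain ⟨⟨f₁, g₁⟩, ⟨⟨hmf, hdf⟩, ⟨hmg, hdg⟩, _⟩, heq⟩ := hx
      rw [Prod.ext_iff] at heq
      obtain ⟨heq1, heq2⟩ := heq
      simp only at heq1 heq2
      subst heq1; subst heq2
      have h1 : h.natDegree ≤ m := le_trans hhle (min_le_left _ _)
      have h2 : h.natDegree ≤ n := le_trans hhle (min_le_right _ _)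
      refine ⟨⟨hmonich.mul hmf, ?_⟩, hmonich.mul hmg, ?_⟩
      · rw [natDegree_mul hmonich.ne_zero hmf.ne_zero, hdf]; omega
      · rw [natDegree_mul hmonich.ne_zero hmg.ne_zero, hdg]; omega
  -- now count
  have hFfin : ∀ h, (F h).Finite := fun h => (cop_finite _ _).image _
  have hFcard : ∀ h : k[X], h.Monic →
      (F h).ncard = (Cop k (m - h.natDegree) (n - h.natDegree)).ncard := by
    intro h hmon
    apply Set.ncard_image_of_injOn
    intro p _ p' _ hpp
    rw [Prod.ext_iff] at hpp
    obtain ⟨e1, e2⟩ := hpp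
    simp only at e1 e2
    exact Prod.ext (mul_left_cancel₀ hmon.ne_zero e1) (mul_left_cancel₀ hmon.ne_zero e2)
  have hdisj : ∀ h ∈ MLe, ∀ h' ∈ MLe, h ≠ h' → Disjoint (F h) (F h') := by
    intro h hh h' hh' hne
    obtain ⟨hm1, _⟩ := (hmem h).mp hh
    obtain ⟨hm2, _⟩ := (hmem h').mp hh'
    rw [Set.disjoint_left]
    rintro ⟨x, y⟩ hx hy
    obtain ⟨⟨f₁, g₁⟩, ⟨_, _, hcop1⟩, heq1⟩ := hx
    obtain ⟨⟨f₂, g₂⟩, ⟨_, _, hcop2⟩, heq2⟩ := hy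
    rw [Prod.ext_iff] at heq1 heq2
    simp only at heq1 heq2
    apply hne
    have e1 : h * f₁ = h' * f₂ := heq1.1.trans heq2.1.symm
    have e2 : h * g₁ = h' * g₂ := heq1.2.trans heq2.2.symm
    have hdvd12 : h ∣ h' := by
      obtain ⟨a, b, hab⟩ := hcop2
      have hab' : a * f₂ + b * g₂ = 1 := hab
      refine ⟨a * f₁ + b * g₁, ?_⟩
      calc h' = h' * (a * f₂ + b * g₂) := by rw [hab', mul_one]
        _ = a * (h' * f₂) + b * (h' * g₂) := by ring
        _ = a * (h * f₁) + b * (h * g₁) := by rw [e1, e2]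
        _ = h * (a * f₁ + b * g₁) := by ring
    have hdvd21 : h' ∣ h := by
      obtain ⟨a, b, hab⟩ := hcop1
      have hab' : a * f₁ + b * g₁ = 1 := hab
      refine ⟨a * f₂ + b * g₂, ?_⟩
      calc h = h * (a * f₁ + b * g₁) := by rw [hab', mul_one]
        _ = a * (h * f₁) + b * (h * g₁) := by ring
        _ = a * (h' * f₂) + b * (h' * g₂) := by rw [e1, e2]
        _ = h' * (a * f₂ + b * g₂) := by ring
    exact eq_of_monic_of_associated hm1 hm2 (associated_of_dvd_dvd hdvd12 hdvd21)
  have hcount : (Mon k m ×ˢ Mon k n).ncard = ∑ h ∈ MLe, (F h).ncard := by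
    rw [hdecomp]
    exact ncard_biUnion MLe F hFfin hdisj
  have hprod : (Mon k m ×ˢ Mon k n).ncard = q ^ (m + n) := by
    rw [ncard_prod, ncard_mon, ncard_mon, ← pow_add]
  rw [← hprod, hcount, hMLe, Finset.sum_biUnion]
  · apply Finset.sum_congr rfl
    intro e he
    have : ∀ h ∈ (mon_finite (k := k) e).toFinset, (F h).ncard = (Cop k (m-e) (n-e)).ncard := by
      intro h hh
      rw [Set.Finite.mem_toFinset] at hh
      rw [hFcard h hh.1, hh.2]
    rw [Finset.sum_congr rfl this, Finset.sum_const, smul_eq_mul]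
    congr 1
    rw [← Set.ncard_coe_finset, Set.Finite.coe_toFinset, ncard_mon]
  · intro e he e' he' hne
    simp only [Function.onFun]
    rw [Finset.disjoint_left]
    intro a ha hb
    rw [Set.Finite.mem_toFinset] at ha hb
    exact hne (by rw [← ha.2, ← hb.2])

lemma sum_arith (q : ℕ) (hq : 1 ≤ q) :
    ∀ s m n, 1 ≤ s → s = min m n →
      ∑ e ∈ Finset.range s, q^(e+1) * cc q (m-(e+1)) (n-(e+1)) = q^(m+n-1) := by
  intro s
  induction s with
  | zero => intro m n h1 _; omega
  | succ s ih =>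
    intro m n _ hmin
    rcases Nat.eq_zero_or_pos s with hs | hs
    · subst hs
      have hm : 1 ≤ m := by omega
      have hn : 1 ≤ n := by omega
      have hor : m - 1 = 0 ∨ n - 1 = 0 := by omega
      rw [Finset.sum_range_one]
      rw [show cc q (m-1) (n-1) = q^((m-1)+(n-1)) from if_pos hor]
      rw [← pow_add]
      congr 1
      omega
    · have hm : 2 ≤ m := by omega
      have hn : 2 ≤ n := by omega
      rw [Finset.sum_range_succ']
      have hstep : ∀ e, q^(e+1+1) * cc q (m-(e+1+1)) (n-(e+1+1))
          = q * (q^(e+1) * cc q ((m-1)-(e+1)) ((n-1)-(e+1))) := by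
        intro e
        have e1 : m-(e+1+1) = (m-1)-(e+1) := by omega
        have e2 : n-(e+1+1) = (n-1)-(e+1) := by omega
        rw [e1, e2, pow_succ]
        ring
      rw [Finset.sum_congr rfl (fun e _ => hstep e), ← Finset.mul_sum,
        ih (m-1) (n-1) hs (by omega)]
      have hcc : cc q (m-(0+1)) (n-(0+1)) = (q-1) * q^(m+n-3) := by
        have e0 : m-(0+1)+(n-(0+1))-1 = m+n-3 := by omega
        rw [cc, if_neg (by omega), e0]
      rw [hcc]
      have e3 : (m-1)+(n-1)-1 = m+n-3 := by omega
      rw [e3]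
      have e4 : m+n-1 = (m+n-3)+2 := by omega
      obtain ⟨r, rfl⟩ : ∃ r, q = r + 1 := ⟨q - 1, (Nat.sub_add_cancel hq).symm⟩
      rw [e4, pow_add]
      simp only [Nat.add_sub_cancel]
      ring

lemma ncard_cop (m n : ℕ) : (Cop k m n).ncard = cc (Fintype.card k) m n := by
  set q := Fintype.card k with hq
  have hq1 : 1 ≤ q := Fintype.card_pos
  -- strong induction on m + n
  suffices H : ∀ N m n, m + n ≤ N → (Cop k m n).ncard = cc q m n from H (m+n) m n le_rfl
  intro N
  induction N with
  | zero =>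
    intro m n hmn
    have hm : m = 0 := by omega
    have hn : n = 0 := by omega
    subst hm; subst hn
    rw [ncard_cop_right_zero, cc, if_pos (Or.inl rfl)]
  | succ N ih =>
    intro m n hmn
    rcases Nat.eq_zero_or_pos m with hm | hm
    · subst hm
      rw [ncard_cop_left_zero, cc, if_pos (Or.inl rfl), zero_add]
    rcases Nat.eq_zero_or_pos n with hn | hn
    · subst hn
      rw [ncard_cop_right_zero, cc, if_pos (Or.inr rfl), add_zero]
    -- main case
    have hkey := key_identity (k := k) m n
    have hmin : 1 ≤ min m n := le_min hm hn
    rw [Finset.sum_range_succ'] at hkey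
    -- rewrite the inner sum using ih and sum_arith
    have hsum : ∑ e ∈ Finset.range (min m n), q^(e+1) * (Cop k (m-(e+1)) (n-(e+1))).ncard
        = q^(m+n-1) := by
      rw [Finset.sum_congr rfl (fun e he => ?_), sum_arith q hq1 (min m n) m n hmin rfl]
      rw [ih (m-(e+1)) (n-(e+1)) (by omega)]
    rw [hsum] at hkey
    simp only [pow_zero, one_mul, Nat.sub_zero] at hkey
    -- hkey : q^(m+n) = q^(m+n-1) + (Cop k m n).ncard
    rw [cc, if_neg (by omega)]
    have hpow : q^(m+n) = q * q^(m+n-1) := by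
      rw [← pow_succ']
      congr 1
      omega
    obtain ⟨r, hr⟩ : ∃ r, q = r + 1 := ⟨q - 1, (Nat.sub_add_cancel hq1).symm⟩
    rw [hpow] at hkey
    rw [hr] at hkey ⊢
    simp only [Nat.add_sub_cancel]
    have expand : (r + 1) * (r+1)^(m+n-1) = r * (r+1)^(m+n-1) + (r+1)^(m+n-1) := by ring
    omega

/-! ### Pairs with arbitrary nonzero leading coefficients -/

def CopF (k : Type) [Field k] (m n : ℕ) : Set (k[X] × k[X]) :=
  {p | p.1 ≠ 0 ∧ p.1.natDegree = m ∧ p.2 ≠ 0 ∧ p.2.natDegree = n ∧ IsCoprime p.1 p.2}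

lemma copF_eq_image (m n : ℕ) :
    CopF k m n = (fun x : (kˣ × kˣ) × (k[X] × k[X]) =>
      (Polynomial.C (x.1.1 : k) * x.2.1, Polynomial.C (x.1.2 : k) * x.2.2)) ''
      ((Set.univ : Set (kˣ × kˣ)) ×ˢ Cop k m n) := by
  ext ⟨f, g⟩
  constructor
  · rintro ⟨hf0, hfd, hg0, hgd, hcop⟩
    have hu : f.leadingCoeff ≠ 0 := leadingCoeff_ne_zero.mpr hf0
    have hv : g.leadingCoeff ≠ 0 := leadingCoeff_ne_zero.mpr hg0
    refine ⟨((Units.mk0 _ hu, Units.mk0 _ hv),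
      (Polynomial.C f.leadingCoeff⁻¹ * f, Polynomial.C g.leadingCoeff⁻¹ * g)),
      ⟨Set.mem_univ _, ?_, ?_, ?_⟩, ?_⟩
    · exact ⟨by rw [Polynomial.Monic, leadingCoeff_mul, leadingCoeff_C, inv_mul_cancel₀ hu],
        by rw [natDegree_C_mul (inv_ne_zero hu), hfd]⟩
    · exact ⟨by rw [Polynomial.Monic, leadingCoeff_mul, leadingCoeff_C, inv_mul_cancel₀ hv],
        by rw [natDegree_C_mul (inv_ne_zero hv), hgd]⟩
    · obtain ⟨x, y, hxy⟩ := hcop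
      refine ⟨x * Polynomial.C f.leadingCoeff, y * Polynomial.C g.leadingCoeff, ?_⟩
      calc x * Polynomial.C f.leadingCoeff * (Polynomial.C f.leadingCoeff⁻¹ * f)
            + y * Polynomial.C g.leadingCoeff * (Polynomial.C g.leadingCoeff⁻¹ * g)
          = x * (Polynomial.C (f.leadingCoeff * f.leadingCoeff⁻¹)) * f
            + y * (Polynomial.C (g.leadingCoeff * g.leadingCoeff⁻¹)) * g := by
            rw [Polynomial.C_mul, Polynomial.C_mul]; ring
        _ = x * f + y * g := by
            rw [mul_inv_cancel₀ hu, mul_inv_cancel₀ hv, Polynomial.C_1, mul_one, mul_one]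
        _ = 1 := hxy
    · simp only [Units.val_mk0]
      rw [← mul_assoc, ← mul_assoc, ← Polynomial.C_mul, ← Polynomial.C_mul,
        mul_inv_cancel₀ hu, mul_inv_cancel₀ hv, Polynomial.C_1, one_mul, one_mul]
  · rintro ⟨⟨⟨a, b⟩, ⟨f₀, g₀⟩⟩, ⟨-, ⟨hmf, hdf⟩, ⟨hmg, hdg⟩, hcop⟩, heq⟩
    rw [Prod.ext_iff] at heq
    simp only at heq
    obtain ⟨h1, h2⟩ := heq
    subst h1; subst h2
    have ha : (a : k) ≠ 0 := a.ne_zero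
    have hb : (b : k) ≠ 0 := b.ne_zero
    refine ⟨mul_ne_zero (Polynomial.C_ne_zero.mpr ha) hmf.ne_zero,
      by rw [natDegree_C_mul ha, hdf],
      mul_ne_zero (Polynomial.C_ne_zero.mpr hb) hmg.ne_zero,
      by rw [natDegree_C_mul hb, hdg], ?_⟩
    obtain ⟨x, y, hxy⟩ := hcop
    have hxy' : x * f₀ + y * g₀ = 1 := hxy
    refine ⟨x * Polynomial.C (a : k)⁻¹, y * Polynomial.C (b : k)⁻¹, ?_⟩
    calc x * Polynomial.C (a : k)⁻¹ * (Polynomial.C (a : k) * f₀)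
          + y * Polynomial.C (b : k)⁻¹ * (Polynomial.C (b : k) * g₀)
        = x * (Polynomial.C ((a : k)⁻¹ * a)) * f₀
          + y * (Polynomial.C ((b : k)⁻¹ * b)) * g₀ := by
          rw [Polynomial.C_mul, Polynomial.C_mul]; ring
      _ = x * f₀ + y * g₀ := by
          rw [inv_mul_cancel₀ ha, inv_mul_cancel₀ hb, Polynomial.C_1, mul_one, mul_one]
      _ = 1 := hxy'

lemma copF_finite (m n : ℕ) : (CopF k m n).Finite := by
  rw [copF_eq_image]
  exact (Set.Finite.prod (Set.finite_univ) (cop_finite m n)).image _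

lemma ncard_copF (m n : ℕ) : (CopF k m n).ncard
    = (Fintype.card k - 1) * (Fintype.card k - 1) * cc (Fintype.card k) m n := by
  classical
  have hinj : Set.InjOn (fun x : (kˣ × kˣ) × (k[X] × k[X]) =>
      (Polynomial.C (x.1.1 : k) * x.2.1, Polynomial.C (x.1.2 : k) * x.2.2))
      ((Set.univ : Set (kˣ × kˣ)) ×ˢ Cop k m n) := by
    rintro ⟨⟨a, b⟩, ⟨f₀, g₀⟩⟩ ⟨-, ⟨hmf, -⟩, ⟨hmg, -⟩, -⟩
      ⟨⟨a', b'⟩, ⟨f₀', g₀'⟩⟩ ⟨-, ⟨hmf', -⟩, ⟨hmg', -⟩, -⟩ heq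
    rw [Prod.ext_iff] at heq
    obtain ⟨e1, e2⟩ := heq
    simp only at e1 e2
    have hma : (a : k) = (a' : k) := by
      have := congrArg Polynomial.leadingCoeff e1
      rwa [leadingCoeff_mul, leadingCoeff_mul, leadingCoeff_C, leadingCoeff_C,
        hmf.leadingCoeff, hmf'.leadingCoeff, mul_one, mul_one] at this
    have hmb : (b : k) = (b' : k) := by
      have := congrArg Polynomial.leadingCoeff e2
      rwa [leadingCoeff_mul, leadingCoeff_mul, leadingCoeff_C, leadingCoeff_C,
        hmg.leadingCoeff, hmg'.leadingCoeff, mul_one, mul_one] at this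
    have hf : f₀ = f₀' := by
      rw [hma] at e1
      exact mul_left_cancel₀ (Polynomial.C_ne_zero.mpr a'.ne_zero) e1
    have hg : g₀ = g₀' := by
      rw [hmb] at e2
      exact mul_left_cancel₀ (Polynomial.C_ne_zero.mpr b'.ne_zero) e2
    simp [Prod.ext_iff, Units.ext_iff, hma, hmb, hf, hg]
  rw [copF_eq_image, Set.ncard_image_of_injOn hinj, ncard_prod, Set.ncard_univ,
    Nat.card_prod, Nat.card_eq_fintype_card, Fintype.card_units, ncard_cop]

/-! ### arithmetic sums -/

lemma sumA (q : ℕ) (hq : 1 ≤ q) (M : ℕ) (hM : 1 ≤ M) (N : ℕ) :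
    ∑ n ∈ Finset.range (N+1), cc q M n = q^(M+N) := by
  induction N with
  | zero => rw [Finset.sum_range_one, cc, if_pos (Or.inr rfl)]
  | succ N ih =>
    rw [Finset.sum_range_succ, ih, cc, if_neg (by omega)]
    have e1 : M+(N+1)-1 = M+N := by omega
    rw [e1]
    obtain ⟨r, rfl⟩ : ∃ r, q = r + 1 := ⟨q - 1, (Nat.sub_add_cancel hq).symm⟩
    simp only [Nat.add_sub_cancel]
    rw [show M+(N+1) = (M+N)+1 from by omega, pow_succ]
    ring

lemma sumB (q : ℕ) (hq : 1 ≤ q) (N : ℕ) (hN : 1 ≤ N) :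
    ∀ M, 1 ≤ M → ∑ m ∈ Finset.range M, cc q m N = q^(N+M-1) := by
  intro M
  induction M with
  | zero => omega
  | succ M ih =>
    intro _
    rcases Nat.eq_zero_or_pos M with hM | hM
    · subst hM
      rw [show N+1-1 = N from by omega, Finset.sum_range_one, cc, if_pos (Or.inl rfl), zero_add]
    rw [Finset.sum_range_succ, ih hM, cc, if_neg (by omega)]
    have e1 : N+(M+1)-1 = (N+M-1)+1 := by omega
    have e2 : M+N-1 = N+M-1 := by omega
    rw [e1, e2, pow_succ]
    obtain ⟨r, rfl⟩ : ∃ r, q = r + 1 := ⟨q - 1, (Nat.sub_add_cancel hq).symm⟩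
    simp only [Nat.add_sub_cancel]
    ring

/-! ### the full univariate set -/

def WSet (k : Type) [Field k] (d₁ d₂ : ℕ) : Set (k[X] × k[X]) :=
  {p | p.1 ≠ 0 ∧ p.2 ≠ 0 ∧ p.1.natDegree ≤ d₁ ∧ p.2.natDegree ≤ d₂ ∧
    (p.1.natDegree = d₁ ∨ p.2.natDegree = d₂) ∧ IsCoprime p.1 p.2}

lemma wset_finite (d₁ d₂ : ℕ) : (WSet k d₁ d₂).Finite := by
  classical
  apply Set.Finite.subset (Set.Finite.biUnion (Set.finite_Iic (d₁, d₂))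
    (fun t _ => copF_finite t.1 t.2))
  rintro ⟨f, g⟩ h
  obtain ⟨h1, h2, h3, h4, h5, h6⟩ : f ≠ 0 ∧ g ≠ 0 ∧ f.natDegree ≤ d₁ ∧ g.natDegree ≤ d₂ ∧
    (f.natDegree = d₁ ∨ g.natDegree = d₂) ∧ IsCoprime f g := h
  exact Set.mem_biUnion (s := Set.Iic (d₁, d₂))
    (t := fun t : ℕ × ℕ => CopF k t.1 t.2) (x := (f.natDegree, g.natDegree))
    (Prod.mk_le_mk.mpr ⟨h3, h4⟩)
    (show (f, g) ∈ CopF k f.natDegree g.natDegree from ⟨h1, rfl, h2, rfl, h6⟩)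

lemma ncard_wset (d₁ d₂ : ℕ) (hd₁ : 1 ≤ d₁) (hd₂ : 1 ≤ d₂) :
    (WSet k d₁ d₂).ncard = (Fintype.card k - 1) * (Fintype.card k - 1) *
      (Fintype.card k ^ (d₁+d₂) + Fintype.card k ^ (d₁+d₂-1)) := by
  classical
  set q := Fintype.card k with hq
  have hq1 : 1 ≤ q := Fintype.card_pos
  set T : Finset (ℕ × ℕ) := ((Finset.range (d₂+1)).image fun n => (d₁, n)) ∪
    ((Finset.range d₁).image fun m => (m, d₂)) with hT
  have hW : WSet k d₁ d₂ = ⋃ t ∈ T, CopF k t.1 t.2 := by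
    ext ⟨f, g⟩
    simp only [Set.mem_iUnion]
    constructor
    · intro h
      obtain ⟨h1, h2, h3, h4, h5, h6⟩ : f ≠ 0 ∧ g ≠ 0 ∧ f.natDegree ≤ d₁ ∧
        g.natDegree ≤ d₂ ∧ (f.natDegree = d₁ ∨ g.natDegree = d₂) ∧ IsCoprime f g := h
      refine ⟨(f.natDegree, g.natDegree), ?_,
        show (f, g) ∈ CopF k f.natDegree g.natDegree from ⟨h1, rfl, h2, rfl, h6⟩⟩
      rw [hT, Finset.mem_union]
      rcases h5 with h5 | h5
      · exact Or.inl (Finset.mem_image.mpr ⟨g.natDegree, Finset.mem_range.mpr (by omega),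
          by rw [h5]⟩)
      · rcases Nat.lt_or_ge f.natDegree d₁ with hlt | hge
        · exact Or.inr (Finset.mem_image.mpr ⟨f.natDegree, Finset.mem_range.mpr hlt,
            by rw [h5]⟩)
        · exact Or.inl (Finset.mem_image.mpr ⟨g.natDegree, Finset.mem_range.mpr (by omega),
            by rw [show f.natDegree = d₁ from by omega, h5]⟩)
    · rintro ⟨⟨a, b⟩, ht, hmemF⟩
      obtain ⟨h1, h2, h3, h4, h5⟩ : f ≠ 0 ∧ f.natDegree = a ∧ g ≠ 0 ∧ g.natDegree = b ∧
        IsCoprime f g := hmemF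
      have hab : (a ≤ d₁ ∧ b ≤ d₂) ∧ (a = d₁ ∨ b = d₂) := by
        rw [hT, Finset.mem_union] at ht
        rcases ht with ht | ht <;> obtain ⟨x, hx, hxe⟩ := Finset.mem_image.mp ht <;>
          rw [Finset.mem_range] at hx <;> cases hxe <;> omega
      exact show f ≠ 0 ∧ g ≠ 0 ∧ f.natDegree ≤ d₁ ∧ g.natDegree ≤ d₂ ∧
        (f.natDegree = d₁ ∨ g.natDegree = d₂) ∧ IsCoprime f g from
        ⟨h1, h3, by omega, by omega, by omega, h5⟩
  have hdisj : ∀ t ∈ T, ∀ t' ∈ T, t ≠ t' → Disjoint (CopF k t.1 t.2) (CopF k t'.1 t'.2) := by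
    intro t _ t' _ hne
    rw [Set.disjoint_left]
    rintro ⟨f, g⟩ ⟨-, e1, -, e2, -⟩ ⟨-, e1', -, e2', -⟩
    exact hne (Prod.ext (e1 ▸ e1') (e2 ▸ e2'))
  rw [hW, ncard_biUnion T _ (fun t => copF_finite t.1 t.2) hdisj]
  have hsum : ∑ t ∈ T, (CopF k t.1 t.2).ncard
      = ∑ t ∈ T, (q-1) * (q-1) * cc q t.1 t.2 :=
    Finset.sum_congr rfl fun t _ => ncard_copF t.1 t.2
  rw [hsum, hT, Finset.sum_union, Finset.sum_image (by intro x _ y _ h; cases h; rfl),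
    Finset.sum_image (by intro x _ y _ h; cases h; rfl)]
  · simp only [← Finset.mul_sum]
    rw [sumA q hq1 d₁ hd₁ d₂, sumB q hq1 d₂ hd₂ d₁ hd₁]
    rw [show d₂ + d₁ - 1 = d₁ + d₂ - 1 from by omega, show d₁ + d₂ = d₁ + d₂ from rfl]
    ring
  · rw [Finset.disjoint_left]
    intro t ht ht'
    obtain ⟨x, hx, hxe⟩ := Finset.mem_image.mp ht
    obtain ⟨y, hy, hye⟩ := Finset.mem_image.mp ht'
    rw [Finset.mem_range] at hx hy
    rw [← hye] at hxe
    cases hxe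
    omega

/-! ### Homogeneous polynomials in two variables vs univariate polynomials -/

open MvPolynomial in
def phiMap (k : Type) [Field k] : MvPolynomial (Fin 2) k →ₐ[k] k[X] :=
  MvPolynomial.aeval ![Polynomial.X, 1]

open MvPolynomial in
def psiMap (k : Type) [Field k] : MvPolynomial (Fin 2) k →ₐ[k] k[X] :=
  MvPolynomial.aeval ![1, Polynomial.X]

def vv (i j : ℕ) : Fin 2 →₀ ℕ := Finsupp.single 0 i + Finsupp.single 1 j

lemma vv_apply_zero (i j : ℕ) : vv i j 0 = i := by simp [vv]

lemma vv_apply_one (i j : ℕ) : vv i j 1 = j := by simp [vv]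

lemma fdeg (v : Fin 2 →₀ ℕ) : v.degree = v 0 + v 1 := by
  rw [Finsupp.degree_apply, show ∑ i ∈ v.support, v i = ∑ i : Fin 2, v i from
    Finset.sum_subset (Finset.subset_univ _)
      (fun x _ hx => Finsupp.notMem_support_iff.mp hx), Fin.sum_univ_two]

lemma vv_ext {v : Fin 2 →₀ ℕ} {i j : ℕ} (h0 : v 0 = i) (h1 : v 1 = j) : v = vv i j := by
  ext a
  rcases Fin.exists_fin_two.mp ⟨a, rfl⟩ with ha | ha <;> subst ha <;>
    simp [vv_apply_zero, vv_apply_one, h0, h1]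

def Psi (d : ℕ) (f : k[X]) : MvPolynomial (Fin 2) k :=
  ∑ i ∈ Finset.range (d+1), MvPolynomial.monomial (vv i (d-i)) (f.coeff i)

lemma Psi_homog (d : ℕ) (f : k[X]) : (Psi d f).IsHomogeneous d := by
  apply MvPolynomial.IsHomogeneous.sum
  intro i hi
  rw [Finset.mem_range] at hi
  exact MvPolynomial.isHomogeneous_monomial _ (by rw [fdeg, vv_apply_zero, vv_apply_one]; omega)

lemma phi_monomial (v : Fin 2 →₀ ℕ) (c : k) :
    phiMap k (MvPolynomial.monomial v c) = Polynomial.C c * Polynomial.X ^ (v 0) := by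
  rw [phiMap, MvPolynomial.aeval_monomial,
    Finsupp.prod_fintype _ _ (fun i => pow_zero _), Fin.prod_univ_two]
  simp [Polynomial.algebraMap_eq]

lemma phi_Psi (d : ℕ) (f : k[X]) (h : f.natDegree ≤ d) : phiMap k (Psi d f) = f := by
  rw [Psi, map_sum]
  have e1 : ∀ i ∈ Finset.range (d+1),
      phiMap k (MvPolynomial.monomial (vv i (d-i)) (f.coeff i))
      = Polynomial.monomial i (f.coeff i) := by
    intro i _
    rw [phi_monomial, vv_apply_zero, Polynomial.C_mul_X_pow_eq_monomial]
  rw [Finset.sum_congr rfl e1, ← Polynomial.as_sum_range' f (d+1) (by omega)]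

lemma Psi_monomial_X_pow (d j : ℕ) (hj : j ≤ d) (c : k) :
    Psi d (Polynomial.C c * Polynomial.X ^ j) = MvPolynomial.monomial (vv j (d-j)) c := by
  rw [Psi]
  have e1 : ∀ i ∈ Finset.range (d+1),
      MvPolynomial.monomial (vv i (d-i)) ((Polynomial.C c * Polynomial.X ^ j).coeff i)
      = if i = j then MvPolynomial.monomial (vv i (d-i)) c else 0 := by
    intro i _
    rw [Polynomial.coeff_C_mul, Polynomial.coeff_X_pow]
    split <;> simp_all
  rw [Finset.sum_congr rfl e1, Finset.sum_ite_eq' (Finset.range (d+1)) j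
    (fun i => MvPolynomial.monomial (vv i (d-i)) c), if_pos (Finset.mem_range.mpr (by omega))]

lemma Psi_phi (d : ℕ) (P : MvPolynomial (Fin 2) k) (hP : P.IsHomogeneous d) :
    Psi d (phiMap k P) = P := by
  have hPsiAdd : ∀ (s : Finset (Fin 2 →₀ ℕ)) (F : (Fin 2 →₀ ℕ) → k[X]),
      Psi d (∑ v ∈ s, F v) = ∑ v ∈ s, Psi d (F v) := by
    intro s F
    simp only [Psi, Polynomial.finset_sum_coeff, map_sum]
    rw [Finset.sum_comm]
  have hterm : ∀ v ∈ P.support,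
      Psi d (phiMap k (MvPolynomial.monomial v (MvPolynomial.coeff v P)))
      = MvPolynomial.monomial v (MvPolynomial.coeff v P) := by
    intro v hv
    have hdeg : v.degree = d := by
      rw [Finsupp.degree_eq_weight_one]
      exact hP (MvPolynomial.mem_support_iff.mp hv)
    have hv0 : v 0 ≤ d := by
      have h1 := fdeg v
      omega
    rw [phi_monomial, Psi_monomial_X_pow d (v 0) hv0]
    have hv1 : v 1 = d - v 0 := by have h1 := fdeg v; omega
    rw [(vv_ext rfl hv1 : v = vv (v 0) (d - v 0))]
    simp [vv_apply_zero]
  calc Psi d (phiMap k P)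
      = Psi d (phiMap k (∑ v ∈ P.support, MvPolynomial.monomial v (MvPolynomial.coeff v P)))
        := by rw [MvPolynomial.support_sum_monomial_coeff]
    _ = ∑ v ∈ P.support, Psi d (phiMap k
          (MvPolynomial.monomial v (MvPolynomial.coeff v P))) := by rw [map_sum, hPsiAdd]
    _ = ∑ v ∈ P.support, MvPolynomial.monomial v (MvPolynomial.coeff v P) :=
        Finset.sum_congr rfl hterm
    _ = P := MvPolynomial.support_sum_monomial_coeff P

lemma phi_injOn (d : ℕ) (P Q : MvPolynomial (Fin 2) k) (hP : P.IsHomogeneous d)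
    (hQ : Q.IsHomogeneous d) (h : phiMap k P = phiMap k Q) : P = Q := by
  rw [← Psi_phi d P hP, ← Psi_phi d Q hQ, h]

lemma phi_ne_zero (d : ℕ) (P : MvPolynomial (Fin 2) k) (hP : P.IsHomogeneous d)
    (hP0 : P ≠ 0) : phiMap k P ≠ 0 := by
  intro h
  apply hP0
  rw [← Psi_phi d P hP, h]
  simp [Psi]

lemma phi_natDegree_le (d : ℕ) (P : MvPolynomial (Fin 2) k) (hP : P.IsHomogeneous d) :
    (phiMap k P).natDegree ≤ d := by
  rw [← MvPolynomial.support_sum_monomial_coeff P, map_sum]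
  apply Polynomial.natDegree_sum_le_of_forall_le
  intro v hv
  rw [phi_monomial]
  refine le_trans (Polynomial.natDegree_C_mul_X_pow_le _ _) ?_
  have hdeg : v.degree = d := by
    rw [Finsupp.degree_eq_weight_one]
    exact hP (MvPolynomial.mem_support_iff.mp hv)
  have h1 := fdeg v
  omega

lemma Psi_mul (a b : ℕ) (f g : k[X]) (hf : f.natDegree ≤ a) (hg : g.natDegree ≤ b) :
    Psi (a+b) (f * g) = Psi a f * Psi b g := by
  have h1 : (Psi a f * Psi b g).IsHomogeneous (a+b) := (Psi_homog a f).mul (Psi_homog b g)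
  have h2 := Psi_phi (a+b) _ h1
  rw [← h2, map_mul, phi_Psi a f hf, phi_Psi b g hg]

lemma Psi_one_one : Psi 1 (1 : k[X]) = MvPolynomial.X 1 := by
  have h1 : Psi 1 (Polynomial.C (1:k) * Polynomial.X ^ 0) = MvPolynomial.monomial (vv 0 1) 1 :=
    Psi_monomial_X_pow 1 0 (by omega) 1
  simp only [map_one, one_mul, pow_zero, mul_one] at h1
  rw [h1]
  have h2 : vv 0 1 = Finsupp.single 1 1 := by
    ext a
    rcases Fin.exists_fin_two.mp ⟨a, rfl⟩ with ha | ha <;> subst ha <;>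
      simp [vv, Finsupp.single_apply]
  rw [h2, MvPolynomial.X]

lemma Psi_U_mul (d : ℕ) (f : k[X]) (hd : 1 ≤ d) (hdeg : f.natDegree ≤ d - 1) :
    Psi d f = MvPolynomial.X 1 * Psi (d-1) f := by
  have h := Psi_mul 1 (d-1) 1 f (by simp) hdeg
  rw [one_mul, Psi_one_one] at h
  rw [show 1 + (d-1) = d from by omega] at h
  exact h

lemma coeff_T_Psi (d : ℕ) (f : k[X]) :
    MvPolynomial.coeff (Finsupp.single 0 d) (Psi d f) = f.coeff d := by
  classical
  rw [Psi, MvPolynomial.coeff_sum]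
  have e1 : ∀ i ∈ Finset.range (d+1),
      MvPolynomial.coeff (Finsupp.single 0 d) (MvPolynomial.monomial (vv i (d-i)) (f.coeff i))
      = if i = d then f.coeff i else 0 := by
    intro i hi
    rw [Finset.mem_range] at hi
    rw [MvPolynomial.coeff_monomial]
    by_cases h : i = d
    · subst h
      rw [if_pos, if_pos rfl]
      rw [show vv i (i-i) = Finsupp.single 0 i from by
        ext a; rcases Fin.exists_fin_two.mp ⟨a, rfl⟩ with ha | ha <;> subst ha <;> simp [vv]]
    · rw [if_neg, if_neg h]
      intro hc
      apply h
      have := congrFun (congrArg (fun (w : Fin 2 →₀ ℕ) => (w : Fin 2 → ℕ)) hc) 0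
      simpa [vv_apply_zero] using this
  rw [Finset.sum_congr rfl e1, Finset.sum_ite_eq' (Finset.range (d+1)) d
    (fun i => f.coeff i), if_pos (Finset.mem_range.mpr (by omega))]

lemma U_dvd_coeff (P : MvPolynomial (Fin 2) k) (d : ℕ)
    (h : MvPolynomial.X 1 ∣ P) : MvPolynomial.coeff (Finsupp.single 0 d) P = 0 := by
  classical
  obtain ⟨W, rfl⟩ := h
  rw [MvPolynomial.coeff_X_mul']
  rw [if_neg]
  simp [Finsupp.single_apply]

lemma U_not_unit : ¬ IsUnit (MvPolynomial.X (1 : Fin 2) : MvPolynomial (Fin 2) k) := by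
  intro h
  have : IsUnit (psiMap k (MvPolynomial.X 1)) := h.map (psiMap k)
  rw [psiMap, MvPolynomial.aeval_X] at this
  simp only [Matrix.cons_val_one, Matrix.head_cons] at this
  exact Polynomial.not_isUnit_X this

/-! ### Divisors of homogeneous polynomials are homogeneous -/

def Lam (k : Type) [Field k] :
    MvPolynomial (Fin 2) k →ₐ[k] Polynomial (MvPolynomial (Fin 2) k) :=
  MvPolynomial.aeval ![Polynomial.C (MvPolynomial.X 0) * Polynomial.X,
    Polynomial.C (MvPolynomial.X 1) * Polynomial.X]

lemma Lam_coeff (D : MvPolynomial (Fin 2) k) (j : ℕ) :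
    (Lam k D).coeff j = MvPolynomial.homogeneousComponent j D := by
  induction D using MvPolynomial.induction_on' with
  | add p q ihp ihq => simp [map_add, ihp, ihq]
  | monomial v c =>
    rw [Lam, MvPolynomial.aeval_monomial,
      Finsupp.prod_fintype _ _ (fun i => pow_zero _), Fin.prod_univ_two]
    simp only [Matrix.cons_val_zero, Matrix.cons_val_one, Matrix.head_cons]
    have halg : algebraMap k (Polynomial (MvPolynomial (Fin 2) k)) c
        = Polynomial.C (MvPolynomial.C c) := by
      rw [Polynomial.algebraMap_apply, MvPolynomial.algebraMap_eq]
    rw [halg, mul_pow, mul_pow, ← Polynomial.C_pow, ← Polynomial.C_pow]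
    have hre : Polynomial.C (MvPolynomial.C c) *
        (Polynomial.C (MvPolynomial.X (0:Fin 2) ^ v 0) * Polynomial.X ^ v 0 *
        (Polynomial.C (MvPolynomial.X (1:Fin 2) ^ v 1) * Polynomial.X ^ v 1))
        = Polynomial.C (MvPolynomial.monomial v c) * Polynomial.X ^ (v 0 + v 1) := by
      rw [MvPolynomial.monomial_eq, Finsupp.prod_fintype _ _ (fun i => pow_zero _),
        Fin.prod_univ_two, Polynomial.C_mul, Polynomial.C_mul, pow_add]
      ring
    rw [hre, Polynomial.C_mul_X_pow_eq_monomial, Polynomial.coeff_monomial]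
    have hmem : MvPolynomial.monomial v c ∈
        MvPolynomial.homogeneousSubmodule (Fin 2) k v.degree :=
      (MvPolynomial.mem_homogeneousSubmodule _ _).mpr
        (MvPolynomial.isHomogeneous_monomial _ rfl)
    rw [MvPolynomial.homogeneousComponent_of_mem hmem, fdeg]
    by_cases h : v 0 + v 1 = j
    · rw [if_pos h, if_pos h.symm]
    · rw [if_neg h, if_neg (fun hc => h hc.symm)]

lemma Lam_ne_zero (D : MvPolynomial (Fin 2) k) (hD : D ≠ 0) : Lam k D ≠ 0 := by
  intro h
  apply hD
  have : ∀ j, MvPolynomial.homogeneousComponent j D = 0 := by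
    intro j
    rw [← Lam_coeff, h, Polynomial.coeff_zero]
  rw [← MvPolynomial.sum_homogeneousComponent D]
  exact Finset.sum_eq_zero fun i _ => this i

lemma Lam_homog (d : ℕ) (P : MvPolynomial (Fin 2) k) (hP : P.IsHomogeneous d) :
    Lam k P = Polynomial.C P * Polynomial.X ^ d := by
  rw [Polynomial.C_mul_X_pow_eq_monomial]
  ext j
  rw [Lam_coeff, Polynomial.coeff_monomial,
    MvPolynomial.homogeneousComponent_of_mem ((MvPolynomial.mem_homogeneousSubmodule _ _).mpr hP)]
  by_cases h : j = d
  · rw [if_pos h, if_pos h.symm]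
  · rw [if_neg h, if_neg (fun hc => h hc.symm)]

lemma homog_of_dvd (d : ℕ) (P : MvPolynomial (Fin 2) k) (hP : P.IsHomogeneous d)
    (hP0 : P ≠ 0) (D : MvPolynomial (Fin 2) k) (hD : D ∣ P) :
    ∃ j, D.IsHomogeneous j := by
  classical
  obtain ⟨E, rfl⟩ := hD
  have hD0 : D ≠ 0 := fun h => hP0 (by rw [h, zero_mul])
  have hE0 : E ≠ 0 := fun h => hP0 (by rw [h, mul_zero])
  have hLD : Lam k D ≠ 0 := Lam_ne_zero D hD0
  have hLE : Lam k E ≠ 0 := Lam_ne_zero E hE0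
  have hprod : Lam k D * Lam k E = Polynomial.C (D * E) * Polynomial.X ^ d := by
    rw [← map_mul, Lam_homog d _ hP]
  have hmono : Lam k D * Lam k E = Polynomial.monomial d (D * E) := by
    rw [hprod, Polynomial.C_mul_X_pow_eq_monomial]
  have hPne : D * E ≠ 0 := mul_ne_zero hD0 hE0
  have hdeg : (Lam k D).natDegree + (Lam k E).natDegree = d := by
    rw [← Polynomial.natDegree_mul hLD hLE, hmono, Polynomial.natDegree_monomial,
      if_neg hPne]
  have htrail : (Lam k D).natTrailingDegree + (Lam k E).natTrailingDegree = d := by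
    rw [← Polynomial.natTrailingDegree_mul hLD hLE, hmono,
      Polynomial.natTrailingDegree_monomial hPne]
  have ht1 : (Lam k D).natTrailingDegree ≤ (Lam k D).natDegree :=
    Polynomial.natTrailingDegree_le_natDegree _
  have ht2 : (Lam k E).natTrailingDegree ≤ (Lam k E).natDegree :=
    Polynomial.natTrailingDegree_le_natDegree _
  set j := (Lam k D).natDegree with hj
  have hjt : (Lam k D).natTrailingDegree = j := by omega
  have hcomp : ∀ i, i ≠ j → MvPolynomial.homogeneousComponent i D = 0 := by
    intro i hi
    rw [← Lam_coeff]
    rcases Nat.lt_or_ge i j with h | h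
    · exact Polynomial.coeff_eq_zero_of_lt_natTrailingDegree (by omega)
    · exact Polynomial.coeff_eq_zero_of_natDegree_lt (by omega)
  refine ⟨j, ?_⟩
  have hsum := MvPolynomial.sum_homogeneousComponent D
  by_cases hjle : j ≤ D.totalDegree
  · have hDj : D = MvPolynomial.homogeneousComponent j D := by
      conv_lhs => rw [← hsum]
      exact Finset.sum_eq_single_of_mem j (Finset.mem_range.mpr (by omega))
        (fun i _ hi => hcomp i hi)
    nth_rewrite 1 [hDj]
    exact MvPolynomial.homogeneousComponent_isHomogeneous j D
  · exfalso
    apply hD0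
    rw [← hsum]
    apply Finset.sum_eq_zero
    intro i hi
    rw [Finset.mem_range] at hi
    exact hcomp i (by omega)

/-! ### Forward and backward correspondence -/

lemma not_unit_homog (d : ℕ) (hd : 1 ≤ d) (Q : MvPolynomial (Fin 2) k)
    (hQ : Q.IsHomogeneous d) : ¬ IsUnit Q := by
  intro h
  have hphi : IsUnit (phiMap k Q) := h.map (phiMap k)
  obtain ⟨r, hr, hrC⟩ := Polynomial.isUnit_iff.mp hphi
  have hdeg : (phiMap k Q).natDegree = 0 := by rw [← hrC]; exact Polynomial.natDegree_C _
  have hU : Q = MvPolynomial.X 1 * Psi (d-1) (phiMap k Q) := by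
    conv_lhs => rw [← Psi_phi d Q hQ]
    exact Psi_U_mul d _ hd (by omega)
  have hXunit : IsUnit (MvPolynomial.X (1:Fin 2) : MvPolynomial (Fin 2) k) :=
    isUnit_of_dvd_unit ⟨Psi (d-1) (phiMap k Q), hU⟩ h
  exact U_not_unit hXunit

lemma forward (d₁ d₂ : ℕ) (hd₁ : 1 ≤ d₁) (hd₂ : 1 ≤ d₂) (P Q : MvPolynomial (Fin 2) k)
    (hP : P.IsHomogeneous d₁) (hQ : Q.IsHomogeneous d₂) (hrel : IsRelPrime P Q) :
    (phiMap k P, phiMap k Q) ∈ WSet k d₁ d₂ := by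
  have hP0 : P ≠ 0 := by
    rintro rfl
    exact not_unit_homog d₂ hd₂ Q hQ (hrel (dvd_zero Q) dvd_rfl)
  have hQ0 : Q ≠ 0 := by
    rintro rfl
    exact not_unit_homog d₁ hd₁ P hP (hrel dvd_rfl (dvd_zero P))
  have hf0 : phiMap k P ≠ 0 := phi_ne_zero d₁ P hP hP0
  have hg0 : phiMap k Q ≠ 0 := phi_ne_zero d₂ Q hQ hQ0
  have hfd : (phiMap k P).natDegree ≤ d₁ := phi_natDegree_le d₁ P hP
  have hgd : (phiMap k Q).natDegree ≤ d₂ := phi_natDegree_le d₂ Q hQ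
  have hPeq : P = Psi d₁ (phiMap k P) := (Psi_phi d₁ P hP).symm
  have hQeq : Q = Psi d₂ (phiMap k Q) := (Psi_phi d₂ Q hQ).symm
  have hcop : IsCoprime (phiMap k P) (phiMap k Q) := by
    rw [← isRelPrime_iff_isCoprime]
    intro h hhf hhg
    have hh0 : h ≠ 0 := fun h0 => hf0 (by rw [h0] at hhf; simpa using hhf)
    obtain ⟨f₁, hf₁⟩ := hhf
    obtain ⟨g₁, hg₁⟩ := hhg
    have hf₁0 : f₁ ≠ 0 := fun h0 => hf0 (by rw [hf₁, h0, mul_zero])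
    have hg₁0 : g₁ ≠ 0 := fun h0 => hg0 (by rw [hg₁, h0, mul_zero])
    set a := h.natDegree with ha
    have hdf : a + f₁.natDegree = (phiMap k P).natDegree := by
      rw [hf₁, Polynomial.natDegree_mul hh0 hf₁0]
    have hdg : a + g₁.natDegree = (phiMap k Q).natDegree := by
      rw [hg₁, Polynomial.natDegree_mul hh0 hg₁0]
    have hPdvd : Psi a h ∣ P := by
      refine ⟨Psi (d₁ - a) f₁, ?_⟩
      have hmul := Psi_mul a (d₁ - a) h f₁ le_rfl (by omega)
      rw [← hf₁, show a + (d₁ - a) = d₁ from by omega] at hmul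
      rw [hPeq]
      exact hmul
    have hQdvd : Psi a h ∣ Q := by
      refine ⟨Psi (d₂ - a) g₁, ?_⟩
      have hmul := Psi_mul a (d₂ - a) h g₁ le_rfl (by omega)
      rw [← hg₁, show a + (d₂ - a) = d₂ from by omega] at hmul
      rw [hQeq]
      exact hmul
    have hPsiu : IsUnit (Psi a h) := hrel hPdvd hQdvd
    have := hPsiu.map (phiMap k)
    rwa [phi_Psi a h le_rfl] at this
  refine show phiMap k P ≠ 0 ∧ phiMap k Q ≠ 0 ∧ (phiMap k P).natDegree ≤ d₁ ∧
    (phiMap k Q).natDegree ≤ d₂ ∧ ((phiMap k P).natDegree = d₁ ∨ (phiMap k Q).natDegree = d₂)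
    ∧ IsCoprime (phiMap k P) (phiMap k Q) from ⟨hf0, hg0, hfd, hgd, ?_, hcop⟩
  by_contra hcon
  push_neg at hcon
  have hUP : MvPolynomial.X 1 ∣ P := by
    refine ⟨Psi (d₁ - 1) (phiMap k P), ?_⟩
    conv_lhs => rw [hPeq]
    exact Psi_U_mul d₁ _ hd₁ (by omega)
  have hUQ : MvPolynomial.X 1 ∣ Q := by
    refine ⟨Psi (d₂ - 1) (phiMap k Q), ?_⟩
    conv_lhs => rw [hQeq]
    exact Psi_U_mul d₂ _ hd₂ (by omega)
  exact U_not_unit (hrel hUP hUQ)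

lemma backward (d₁ d₂ : ℕ) (f g : k[X]) (hmem : (f, g) ∈ WSet k d₁ d₂) (hd₁ : 1 ≤ d₁)
    (hd₂ : 1 ≤ d₂) : IsRelPrime (Psi d₁ f) (Psi d₂ g) := by
  obtain ⟨h1, h2, h3, h4, h5, h6⟩ : f ≠ 0 ∧ g ≠ 0 ∧ f.natDegree ≤ d₁ ∧ g.natDegree ≤ d₂ ∧
    (f.natDegree = d₁ ∨ g.natDegree = d₂) ∧ IsCoprime f g := hmem
  intro D hDP hDQ
  have hPne : Psi d₁ f ≠ 0 := by
    intro h0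
    apply h1
    rw [← phi_Psi d₁ f h3, h0, map_zero]
  obtain ⟨j, hDj⟩ := homog_of_dvd d₁ (Psi d₁ f) (Psi_homog d₁ f) hPne D hDP
  have hφDf : phiMap k D ∣ f := by
    have := map_dvd (phiMap k) hDP
    rwa [phi_Psi d₁ f h3] at this
  have hφDg : phiMap k D ∣ g := by
    have := map_dvd (phiMap k) hDQ
    rwa [phi_Psi d₂ g h4] at this
  have hu : IsUnit (phiMap k D) := h6.isUnit_of_dvd' hφDf hφDg
  obtain ⟨r, hr, hrC⟩ := Polynomial.isUnit_iff.mp hu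
  have hdeg0 : (phiMap k D).natDegree = 0 := by rw [← hrC]; exact Polynomial.natDegree_C _
  have hDeq : D = Psi j (phiMap k D) := (Psi_phi j D hDj).symm
  rcases Nat.eq_zero_or_pos j with hj | hj
  · subst hj
    rw [hDeq, ← hrC]
    have : Psi 0 (Polynomial.C r * Polynomial.X ^ 0) = MvPolynomial.monomial (vv 0 0) r :=
      Psi_monomial_X_pow 0 0 le_rfl r
    rw [pow_zero, mul_one] at this
    rw [this, show vv 0 0 = 0 from by ext a; simp [vv]]
    rw [show (MvPolynomial.monomial (0 : Fin 2 →₀ ℕ)) r = MvPolynomial.C r from rfl]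
    exact hr.map (MvPolynomial.C : k →+* MvPolynomial (Fin 2) k)
  · exfalso
    have hXD : MvPolynomial.X 1 ∣ D := by
      refine ⟨Psi (j-1) (phiMap k D), ?_⟩
      conv_lhs => rw [hDeq]
      exact Psi_U_mul j _ hj (by omega)
    rcases h5 with h5 | h5
    · have hc := U_dvd_coeff (Psi d₁ f) d₁ (dvd_trans hXD hDP)
      rw [coeff_T_Psi] at hc
      have : f.coeff d₁ ≠ 0 := by
        rw [← h5]
        exact Polynomial.leadingCoeff_ne_zero.mpr h1
      exact this hc
    · have hc := U_dvd_coeff (Psi d₂ g) d₂ (dvd_trans hXD hDQ)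
      rw [coeff_T_Psi] at hc
      have : g.coeff d₂ ≠ 0 := by
        rw [← h5]
        exact Polynomial.leadingCoeff_ne_zero.mpr h2
      exact this hc

end RPC

/-- Let k be a finite field with q elements. For d₁, d₂ ≥ 1, the number of
pairs (P,Q) of homogeneous polynomials in k[T,U] of degrees d₁ and d₂ respectively with
P and Q relatively prime equals (q²-1)(q-1)q^{d₁+d₂-1}. -/
theorem stmt_0 (k : Type) [Field k] [Fintype k] (q : ℕ) (hq : Fintype.card k = q)
    (d₁ d₂ : ℕ) (h₁ : 1 ≤ d₁) (h₂ : 1 ≤ d₂) :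
    Set.ncard {PQ : MvPolynomial (Fin 2) k × MvPolynomial (Fin 2) k |
      PQ.1.IsHomogeneous d₁ ∧ PQ.2.IsHomogeneous d₂ ∧ IsRelPrime PQ.1 PQ.2}
      = (q ^ 2 - 1) * (q - 1) * q ^ (d₁ + d₂ - 1) := by
  classical
  subst hq
  set q := Fintype.card k with hq
  open RPC in
  have hset : {PQ : MvPolynomial (Fin 2) k × MvPolynomial (Fin 2) k |
      PQ.1.IsHomogeneous d₁ ∧ PQ.2.IsHomogeneous d₂ ∧ IsRelPrime PQ.1 PQ.2}
      = (fun p : Polynomial k × Polynomial k => (RPC.Psi d₁ p.1, RPC.Psi d₂ p.2)) ''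
        RPC.WSet k d₁ d₂ := by
    ext ⟨P, Q⟩
    constructor
    · intro h
      obtain ⟨hP, hQ, hrel⟩ : P.IsHomogeneous d₁ ∧ Q.IsHomogeneous d₂ ∧ IsRelPrime P Q := h
      exact ⟨(RPC.phiMap k P, RPC.phiMap k Q),
        RPC.forward d₁ d₂ h₁ h₂ P Q hP hQ hrel,
        by simp only [RPC.Psi_phi d₁ P hP, RPC.Psi_phi d₂ Q hQ]⟩
    · rintro ⟨⟨f, g⟩, hW, heq⟩
      rw [Prod.ext_iff] at heq
      simp only at heq
      obtain ⟨e1, e2⟩ := heq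
      subst e1; subst e2
      exact show (RPC.Psi d₁ f).IsHomogeneous d₁ ∧ (RPC.Psi d₂ g).IsHomogeneous d₂ ∧
        IsRelPrime (RPC.Psi d₁ f) (RPC.Psi d₂ g) from
        ⟨RPC.Psi_homog d₁ f, RPC.Psi_homog d₂ g, RPC.backward d₁ d₂ f g hW h₁ h₂⟩
  have hinj : Set.InjOn (fun p : Polynomial k × Polynomial k =>
      (RPC.Psi d₁ p.1, RPC.Psi d₂ p.2)) (RPC.WSet k d₁ d₂) := by
    rintro ⟨f, g⟩ hfg ⟨f', g'⟩ hfg' heq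
    obtain ⟨-, -, h3, h4, -, -⟩ : f ≠ 0 ∧ g ≠ 0 ∧ f.natDegree ≤ d₁ ∧ g.natDegree ≤ d₂ ∧
      (f.natDegree = d₁ ∨ g.natDegree = d₂) ∧ IsCoprime f g := hfg
    obtain ⟨-, -, h3', h4', -, -⟩ : f' ≠ 0 ∧ g' ≠ 0 ∧ f'.natDegree ≤ d₁ ∧ g'.natDegree ≤ d₂ ∧
      (f'.natDegree = d₁ ∨ g'.natDegree = d₂) ∧ IsCoprime f' g' := hfg'
    rw [Prod.ext_iff] at heq
    simp only at heq
    obtain ⟨e1, e2⟩ := heq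
    have ef : f = f' := by
      rw [← RPC.phi_Psi d₁ f h3, ← RPC.phi_Psi d₁ f' h3', e1]
    have eg : g = g' := by
      rw [← RPC.phi_Psi d₂ g h4, ← RPC.phi_Psi d₂ g' h4', e2]
    rw [Prod.ext_iff]
    exact ⟨ef, eg⟩
  rw [hset, Set.ncard_image_of_injOn hinj, RPC.ncard_wset d₁ d₂ h₁ h₂, ← hq]
  -- final arithmetic
  have hq2 : 2 ≤ q := Fintype.one_lt_card
  obtain ⟨r, hr⟩ : ∃ r, q = r + 1 := ⟨q - 1, by omega⟩
  rw [hr]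
  simp only [Nat.add_sub_cancel]
  rw [show (r+1)^2 - 1 = r * (r + 2) from by
    have h : (r+1)^2 = r * (r+2) + 1 := by ring
    rw [h]; omega]
  rw [show (r+1)^(d₁+d₂) = (r+1)^(d₁+d₂-1) * (r+1) from by
    rw [← pow_succ]; congr 1; omega]
  ring

end RPC
end

section
/- Define the Farey sequences F_m of lists of pairs of nonnegative integers inductively: F₁ = ((0,1),(1,0)), and F_{m+1} is obtained from F_m by inserting between each pair of consecutive entries (a,b) and (c,d) the mediant (a+c, b+d). Then every positive rational number a/b in lowest terms appears as an entry of F_m for some m. -/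
/-!
Call two entries adjacent if they are consecutive in some `F_m`. Adjacent entries stay
adjacent to their mediant, so starting from the adjacent pair `(0,1), (1,0)` one can walk down
the Stern–Brocot tree: for adjacent `x, y` and coprime `p, q > 0`, the entry `p • x + q • y` is
reached by replacing `(x, y, p, q)` with `(x + y, y, p, q - p)` or `(x, x + y, p - q, q)` as in
the subtractive Euclidean algorithm, until `p = q = 1` and the entry is the mediant `x + y`.
Finally `(a, b) = b • (0, 1) + a • (1, 0)`.
-/

/-- One step of the Farey/mediant construction: insert between each pair of consecutive
entries (a,b) and (c,d) the mediant (a+c, b+d). -/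
def fareyStep : List (ℕ × ℕ) → List (ℕ × ℕ)
  | [] => []
  | [x] => [x]
  | x :: y :: rest => x :: (x.1 + y.1, x.2 + y.2) :: fareyStep (y :: rest)

/-- The Farey sequences: `farey 0` is F₁ = ((0,1),(1,0)), and F_{m+1} = fareyStep F_m. -/
def farey : ℕ → List (ℕ × ℕ)
  | 0 => [(0, 1), (1, 0)]
  | m + 1 => fareyStep (farey m)

lemma fareyStep_cons_cons (x y : ℕ × ℕ) (l : List (ℕ × ℕ)) :
    fareyStep (x :: y :: l) = x :: (x + y) :: fareyStep (y :: l) := rfl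

lemma exists_fareyStep_cons_eq (x : ℕ × ℕ) (l : List (ℕ × ℕ)) :
    ∃ r, fareyStep (x :: l) = x :: r := by
  cases l with
  | nil => exact ⟨[], rfl⟩
  | cons y l => exact ⟨_, fareyStep_cons_cons x y l⟩

lemma exists_fareyStep_append_cons_cons (l₁ l₂ : List (ℕ × ℕ)) (x y : ℕ × ℕ) :
    ∃ s₁ s₂, fareyStep (l₁ ++ x :: y :: l₂) = s₁ ++ x :: (x + y) :: y :: s₂ := by
  induction l₁ with
  | nil =>
    obtain ⟨r, hr⟩ := exists_fareyStep_cons_eq y l₂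
    exact ⟨[], r, by rw [List.nil_append, fareyStep_cons_cons, hr, List.nil_append]⟩
  | cons z l₁ ih =>
    obtain ⟨s₁, s₂, hs⟩ := ih
    obtain ⟨w, l, hl⟩ := List.exists_cons_of_ne_nil (List.append_ne_nil_of_right_ne_nil l₁
      (List.cons_ne_nil x (y :: l₂)))
    refine ⟨z :: (z + w) :: s₁, s₂, ?_⟩
    rw [List.cons_append, hl, fareyStep_cons_cons, ← hl, hs]
    rfl

def FareyAdjacent (x y : ℕ × ℕ) : Prop :=
  ∃ m l₁ l₂, farey m = l₁ ++ x :: y :: l₂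

lemma fareyAdjacent_zero_one_one_zero : FareyAdjacent (0, 1) (1, 0) :=
  ⟨0, [], [], rfl⟩

namespace FareyAdjacent

variable {x y : ℕ × ℕ}

lemma left (h : FareyAdjacent x y) : FareyAdjacent x (x + y) := by
  obtain ⟨m, l₁, l₂, hm⟩ := h
  obtain ⟨s₁, s₂, hs⟩ := exists_fareyStep_append_cons_cons l₁ l₂ x y
  exact ⟨m + 1, s₁, y :: s₂, by rw [farey, hm, hs]⟩

lemma right (h : FareyAdjacent x y) : FareyAdjacent (x + y) y := by
  obtain ⟨m, l₁, l₂, hm⟩ := h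
  obtain ⟨s₁, s₂, hs⟩ := exists_fareyStep_append_cons_cons l₁ l₂ x y
  exact ⟨m + 1, s₁ ++ [x], s₂, by rw [farey, hm, hs, List.append_assoc]; rfl⟩

lemma exists_add_mem_farey (h : FareyAdjacent x y) : ∃ m, x + y ∈ farey m := by
  obtain ⟨m, l₁, l₂, hm⟩ := h.left
  exact ⟨m, by rw [hm]; simp⟩

lemma exists_smul_add_smul_mem_farey {p q : ℕ} (hp : 0 < p) (hq : 0 < q) (hpq : p.Coprime q)
    (h : FareyAdjacent x y) : ∃ m, p • x + q • y ∈ farey m := by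
  induction hn : p + q using Nat.strong_induction_on generalizing p q x y with
  | _ n ih =>
    rcases lt_trichotomy p q with hlt | rfl | hgt
    · have hcop : p.Coprime (q - p) := (Nat.coprime_sub_self_right hlt.le).mpr hpq
      have hsum : p • (x + y) + (q - p) • y = p • x + q • y := by
        rw [smul_add, add_assoc, ← add_smul, Nat.add_sub_cancel' hlt.le]
      exact hsum ▸ ih (p + (q - p)) (by omega) hp (by omega) hcop h.right rfl
    · obtain rfl : p = 1 := (Nat.coprime_self p).mp hpq
      simpa using h.exists_add_mem_farey
    · have hcop : (p - q).Coprime q := (Nat.coprime_sub_self_left hgt.le).mpr hpq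
      have hsum : (p - q) • x + q • (x + y) = p • x + q • y := by
        rw [smul_add, ← add_assoc, ← add_smul, Nat.sub_add_cancel hgt.le]
      exact hsum ▸ ih (p - q + q) (by omega) (by omega) hq hcop h.left rfl

end FareyAdjacent

/-- Every positive rational number a/b in lowest terms appears as an entry
of F_m for some m. -/
theorem stmt_5 (a b : ℕ) (ha : 0 < a) (hb : 0 < b) (h : Nat.gcd a b = 1) :
    ∃ m, (a, b) ∈ farey m := by
  have hab : ((a, b) : ℕ × ℕ) = b • ((0, 1) : ℕ × ℕ) + a • ((1, 0) : ℕ × ℕ) := by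
    ext <;> simp
  rw [hab]
  exact fareyAdjacent_zero_one_one_zero.exists_smul_add_smul_mem_farey hb ha
    (Nat.coprime_comm.mp h)
end
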